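/- arXiv:2106.12057 — 2 statements merged into one kernel-verified Lean document; each statement's English description precedes it below -/
import Mathlib

section
/- Let ρ be a probability density on [0,∞) with finite positive mean, and suppose the joint in/out degree vectors of a type-i vertex are, conditional on an activity level x ~ ρ, independent with each coordinate I_{i,j} ~ Poisson(x·m_j) and O_{i,k} ~ Poisson(x·m'_k) where m_j, m'_k > 0. Then the sufficient-independence condition holds: for all k, l with E[O_{i,k}], E[O_{i,l}] > 0 and all x⃗ ∈ ℕ^r, Σ_y (y/E[O_{i,k}]) Pr[I⃗ = x⃗ ∧ O_{i,k} = y] = Σ_z (z/E[O_{i,l}]) Pr[I⃗ = x⃗ ∧ O_{i,l} = z]. -/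
open MeasureTheory

/-- Poisson probability mass function with mean `mu`. -/
noncomputable def poisPMF (mu : ℝ) (k : ℕ) : ℝ :=
  Real.exp (-mu) * mu ^ k / k.factorial


lemma pois_nonneg {c : ℝ} (hc : 0 ≤ c) (k : ℕ) : 0 ≤ poisPMF c k := by
  unfold poisPMF; positivity

lemma pois_hasSum {c : ℝ} (hc : 0 ≤ c) : HasSum (poisPMF c) 1 := by
  have := ProbabilityTheory.poissonPMFRealSum ⟨c, hc⟩
  convert this using 1
  funext n
  rfl

lemma pois_le_one {c : ℝ} (hc : 0 ≤ c) (k : ℕ) : poisPMF c k ≤ 1 :=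
  le_hasSum (pois_hasSum hc) k (fun j _ => pois_nonneg hc j)

lemma pois_mean_hasSum {c : ℝ} (hc : 0 ≤ c) :
    HasSum (fun y : ℕ => (y : ℝ) * poisPMF c y) c := by
  have h : (fun n : ℕ => ((n + 1 : ℕ) : ℝ) * poisPMF c (n + 1))
      = fun n => c * poisPMF c n := by
    funext n
    simp only [poisPMF, Nat.factorial_succ, pow_succ]
    push_cast
    have h1 : (0:ℝ) < (n.factorial : ℝ) := by positivity
    field_simp
  have h2 : HasSum (fun n : ℕ => ((n + 1 : ℕ) : ℝ) * poisPMF c (n + 1)) c := by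
    rw [h]
    simpa using (pois_hasSum hc).mul_left c
  have := (hasSum_nat_add_iff (f := fun y : ℕ => (y : ℝ) * poisPMF c y) 1).mp h2
  simpa using this

lemma key (rho : ℝ → ℝ) (hrho_nonneg : ∀ x, 0 ≤ rho x)
    (hrho_supp : ∀ x < (0 : ℝ), rho x = 0)
    (hrho_int : Integrable rho) (hmean_int : Integrable (fun x => x * rho x))
    (mu : ℝ) (hmu_pos : 0 < mu)
    (P : ℝ → ℝ) (hPc : Continuous P) (hP0 : ∀ x, 0 ≤ x → 0 ≤ P x)
    (hP1 : ∀ x, 0 ≤ x → P x ≤ 1) (c : ℝ) (hc : 0 < c) :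
    (∑' y : ℕ, ((y : ℝ) / (mu * c)) * ∫ x, rho x * P x * poisPMF (x * c) y)
      = ∫ x, (x / mu) * (rho x * P x) := by
  set f : ℕ → ℝ → ℝ :=
    fun y x => ((y : ℝ) / (mu * c)) * (rho x * P x * poisPMF (x * c) y) with hf
  have hrho0 : ∀ x : ℝ, x < 0 → ∀ y, f y x = 0 := by
    intro x hx y
    simp [hf, hrho_supp x hx]
  have hnn : ∀ y x, 0 ≤ f y x := by
    intro y x
    rcases lt_or_ge x 0 with hx | hx
    · rw [hrho0 x hx]
    · have hxc : 0 ≤ x * c := mul_nonneg hx hc.le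
      have := pois_nonneg hxc y
      have := hrho_nonneg x
      have := hP0 x hx
      positivity
  have hsum : ∀ x : ℝ, HasSum (fun y => f y x) ((x / mu) * (rho x * P x)) := by
    intro x
    rcases lt_or_ge x 0 with hx | hx
    · have : (fun y : ℕ => f y x) = fun _ => (0 : ℝ) := by
        funext y; exact hrho0 x hx y
      rw [this, hrho_supp x hx]
      simpa using hasSum_zero
    · have hxc : 0 ≤ x * c := mul_nonneg hx hc.le
      have h := (pois_mean_hasSum hxc).mul_left (rho x * P x / (mu * c))
      have heq : (fun y : ℕ => rho x * P x / (mu * c) * ((y : ℝ) * poisPMF (x * c) y))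
          = fun y => f y x := by
        funext y; simp only [hf]; ring
      rw [heq] at h
      suffices hh : x / mu * (rho x * P x) = rho x * P x / (mu * c) * (x * c) by
        rw [hh]; exact h
      rw [div_mul_eq_mul_div, div_mul_eq_mul_div,
        div_eq_div_iff hmu_pos.ne' (mul_ne_zero hmu_pos.ne' hc.ne')]
      ring
  have hmeas : ∀ y : ℕ, AEStronglyMeasurable (f y) volume := by
    intro y
    have hpc : Continuous fun x : ℝ => poisPMF (x * c) y := by
      unfold poisPMF
      continuity
    exact ((hrho_int.aestronglyMeasurable.mul hPc.aestronglyMeasurable).mul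
      hpc.aestronglyMeasurable).const_mul _
  have hbd : ∀ x : ℝ, (x / mu) * (rho x * P x) ≤ x * rho x / mu := by
    intro x
    rcases lt_or_ge x 0 with hx | hx
    · simp [hrho_supp x hx]
    · rw [div_mul_eq_mul_div, div_le_div_iff_of_pos_right hmu_pos]
      calc x * (rho x * P x) ≤ x * (rho x * 1) := by
            apply mul_le_mul_of_nonneg_left _ hx
            exact mul_le_mul_of_nonneg_left (hP1 x hx) (hrho_nonneg x)
        _ = x * rho x := by ring
  have hfin : (∑' y : ℕ, ∫⁻ x, ‖f y x‖₊) ≠ ⊤ := by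
    rw [← lintegral_tsum (fun y => (hmeas y).aemeasurable.nnnorm.coe_nnreal_ennreal)]
    have hle : ∫⁻ x, ∑' y : ℕ, (‖f y x‖₊ : ENNReal)
        ≤ ∫⁻ x, (‖x * rho x / mu‖₊ : ENNReal) := by
      apply lintegral_mono
      intro x
      have h1 : ∀ y : ℕ, (‖f y x‖₊ : ENNReal) = ENNReal.ofReal (f y x) :=
        fun y => Real.enorm_eq_ofReal (hnn y x)
      simp only [h1]
      rw [← ENNReal.ofReal_tsum_of_nonneg (fun y => hnn y x) (hsum x).summable,
        (hsum x).tsum_eq]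
      exact le_trans (ENNReal.ofReal_le_ofReal (hbd x)) (Real.ofReal_le_enorm _)
    exact (lt_of_le_of_lt hle (hmean_int.div_const mu).hasFiniteIntegral).ne
  calc (∑' y : ℕ, ((y : ℝ) / (mu * c)) * ∫ x, rho x * P x * poisPMF (x * c) y)
      = ∑' y : ℕ, ∫ x, f y x := by
        refine tsum_congr fun y => ?_
        rw [hf]
        exact (integral_const_mul _ _).symm
    _ = ∫ x, ∑' y : ℕ, f y x := (integral_tsum hmeas hfin).symm
    _ = ∫ x, (x / mu) * (rho x * P x) := by
        refine integral_congr_ae (Filter.Eventually.of_forall fun x => ?_)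
        exact (hsum x).tsum_eq

/-- In the activity-level model (conditionally independent Poisson coordinates
whose means are all proportional to a single random activity level `x ~ ρ`),
the sufficient-independence condition holds: the in-degree vector distribution
weighted by the k-th out-degree coordinate is the same for every coordinate. -/
theorem stmt_15 (r : ℕ) (rho : ℝ → ℝ)
    (hrho_nonneg : ∀ x, 0 ≤ rho x) (hrho_supp : ∀ x < (0 : ℝ), rho x = 0)
    (hrho_prob : ∫ x, rho x = 1)
    (hmean_int : Integrable (fun x => x * rho x))
    (mu : ℝ) (hmu : mu = ∫ x, x * rho x) (hmu_pos : 0 < mu)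
    (m m' : Fin r → ℝ) (hm : ∀ j, 0 < m j) (hm' : ∀ j, 0 < m' j)
    (k l : Fin r) (xv : Fin r → ℕ) :
    (∑' y : ℕ, ((y : ℝ) / (mu * m' k)) *
        ∫ x, rho x * (∏ j, poisPMF (x * m j) (xv j)) * poisPMF (x * m' k) y) =
      ∑' z : ℕ, ((z : ℝ) / (mu * m' l)) *
        ∫ x, rho x * (∏ j, poisPMF (x * m j) (xv j)) * poisPMF (x * m' l) z := by
  have hrho_int : Integrable rho := by
    by_contra h
    rw [integral_undef h] at hrho_prob
    norm_num at hrho_prob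
  set P : ℝ → ℝ := fun x => ∏ j, poisPMF (x * m j) (xv j) with hP
  have hPc : Continuous P := by
    apply continuous_finset_prod
    intro j _
    unfold poisPMF
    continuity
  have hP0 : ∀ x, 0 ≤ x → 0 ≤ P x := fun x hx =>
    Finset.prod_nonneg fun j _ => pois_nonneg (mul_nonneg hx (hm j).le) _
  have hP1 : ∀ x, 0 ≤ x → P x ≤ 1 := fun x hx =>
    Finset.prod_le_one (fun j _ => pois_nonneg (mul_nonneg hx (hm j).le) _)
      (fun j _ => pois_le_one (mul_nonneg hx (hm j).le) _)
  rw [key rho hrho_nonneg hrho_supp hrho_int hmean_int mu hmu_pos P hPc hP0 hP1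
      (m' k) (hm' k),
    key rho hrho_nonneg hrho_supp hrho_int hmean_int mu hmu_pos P hPc hP0 hP1
      (m' l) (hm' l)]
end

section
/- Necessary condition for an outbreak: Let G : [0,1]^r → [0,1]^r be a coordinate-wise convex map with G(1⃗) = 1⃗, Jacobian J at 1⃗, and suppose u⃗ ∈ [0,1]^r is a fixed point G(u⃗) = u⃗ with u⃗ ≠ 1⃗. Then ⟨1⃗ − u⃗, 1⃗ − u⃗⟩ ≤ ⟨1⃗ − u⃗, J(1⃗ − u⃗)⟩; consequently J has an eigenvalue λ with Re(λ) ≥ 1. -/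
open Matrix Filter Set

namespace Stmt17Aux

variable {r : ℕ}

lemma contMV (A : Matrix (Fin r) (Fin r) ℝ) (i : Fin r) :
    Continuous fun x : Fin r → ℝ => A.mulVec x i := by
  simp only [Matrix.mulVec, dotProduct]
  exact continuous_finset_sum _ fun j _ => continuous_const.mul (continuous_apply j)

lemma mem_box {w : Fin r → ℝ} (hw : (1 + w) ∈ Set.Icc (0 : Fin r → ℝ) 1)
    {t : ℝ} (ht0 : 0 ≤ t) (ht1 : t ≤ 1) :
    (1 + t • w) ∈ Set.Icc (0 : Fin r → ℝ) 1 := by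
  rw [Set.mem_Icc] at hw ⊢
  constructor <;> intro i <;>
  · have a := hw.1 i
    have b := hw.2 i
    simp only [Pi.add_apply, Pi.one_apply, Pi.smul_apply, Pi.zero_apply, smul_eq_mul] at *
    nlinarith

lemma apply_le_of_slope {f : (Fin r → ℝ) → (Fin r → ℝ)}
    {L : (Fin r → ℝ) →L[ℝ] (Fin r → ℝ)}
    (hL : HasFDerivWithinAt f L (Set.Icc 0 1) 1)
    {w : Fin r → ℝ} (hw : (1 + w) ∈ Set.Icc (0 : Fin r → ℝ) 1)
    (i : Fin r) {c : ℝ}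
    (hbound : ∀ t : ℝ, 0 < t → t ≤ 1 → f (1 + t • w) i ≤ f 1 i + t * c) :
    L w i ≤ c := by
  set γ : ℝ → (Fin r → ℝ) := fun t => 1 + t • w with hγdef
  have hγ : HasDerivAt γ w 0 := by
    have h1 : HasDerivAt (fun t : ℝ => t • w) ((1 : ℝ) • w) 0 :=
      (hasDerivAt_id 0).smul_const w
    simpa [hγdef] using h1.const_add (1 : Fin r → ℝ)
  have hmapsγ : Set.MapsTo γ (Set.Icc 0 1) (Set.Icc 0 1) := fun t ht =>
    mem_box hw ht.1 ht.2
  have hγ0 : γ 0 = 1 := by simp [hγdef]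
  have hcomp : HasDerivWithinAt (f ∘ γ) (L w) (Set.Icc 0 1) 0 := by
    refine HasFDerivWithinAt.comp_hasDerivWithinAt 0 ?_ hγ.hasDerivWithinAt hmapsγ
    rw [hγ0]; exact hL
  have hi : HasDerivWithinAt (fun t => f (γ t) i) (L w i) (Set.Icc 0 1) 0 :=
    (hasDerivWithinAt_pi.mp hcomp) i
  rw [hasDerivWithinAt_iff_tendsto_slope, Set.Icc_diff_left] at hi
  haveI : (nhdsWithin (0:ℝ) (Set.Ioc 0 1)).NeBot := by
    rw [nhdsWithin_Ioc_eq_nhdsGT zero_lt_one]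
    infer_instance
  refine le_of_tendsto hi ?_
  filter_upwards [self_mem_nhdsWithin] with t ht
  have ht0 : 0 < t := ht.1
  have hb := hbound t ht0 ht.2
  have h0 : γ 0 = 1 := hγ0
  rw [slope_def_field, sub_zero, div_le_iff₀ ht0]
  have e0 : f (γ 0) i = f 1 i := by rw [h0]
  have et : f (γ t) i = f (1 + t • w) i := rfl
  rw [e0, et]
  nlinarith [hb]

/-- Perron for strictly positive matrices, with a sub-eigenvector lower bound. -/
lemma pos_pf (A : Matrix (Fin r) (Fin r) ℝ) (hA : ∀ i j, 0 < A i j)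
    (v : Fin r → ℝ) (hv0 : ∀ i, 0 ≤ v i) (hvne : v ≠ 0)
    (hvA : ∀ i, v i ≤ A.mulVec v i) :
    ∃ t x, 1 ≤ t ∧ t ≤ (∑ i, ∑ j, A i j) ∧ (∀ i, 0 ≤ x i) ∧ (∑ i, x i = 1) ∧
      A.mulVec x = t • x := by
  classical
  set M : ℝ := ∑ i, ∑ j, A i j with hM
  set K : Set (ℝ × (Fin r → ℝ)) :=
    {p | 1 ≤ p.1 ∧ (∀ i, 0 ≤ p.2 i) ∧ (∑ i, p.2 i = 1) ∧
      ∀ i, p.1 * p.2 i ≤ A.mulVec p.2 i} with hKdef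
  have hbd : ∀ p ∈ K, p.1 ≤ M := by
    rintro ⟨t, x⟩ ⟨ht1, hx0, hxs, hxA⟩
    have hx1 : ∀ j, x j ≤ 1 := by
      intro j
      calc x j ≤ ∑ i, x i := Finset.single_le_sum (fun i _ => hx0 i) (Finset.mem_univ j)
        _ = 1 := hxs
    calc t = t * ∑ i, x i := by rw [hxs]; ring
      _ = ∑ i, t * x i := by rw [Finset.mul_sum]
      _ ≤ ∑ i, A.mulVec x i := Finset.sum_le_sum fun i _ => hxA i
      _ = ∑ i, ∑ j, A i j * x j := rfl
      _ ≤ M := by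
          refine Finset.sum_le_sum fun i _ => Finset.sum_le_sum fun j _ => ?_
          calc A i j * x j ≤ A i j * 1 :=
                mul_le_mul_of_nonneg_left (hx1 j) (hA i j).le
            _ = A i j := mul_one _
  have hKsub : K ⊆ (Set.Icc (1:ℝ) M) ×ˢ (Set.Icc (0 : Fin r → ℝ) 1) := by
    rintro ⟨t, x⟩ hp
    obtain ⟨ht1, hx0, hxs, hxA⟩ := hp
    refine ⟨⟨ht1, hbd _ ⟨ht1, hx0, hxs, hxA⟩⟩, fun i => hx0 i, fun i => ?_⟩
    calc x i ≤ ∑ j, x j := Finset.single_le_sum (fun j _ => hx0 j) (Finset.mem_univ i)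
      _ = 1 := hxs
  have c2 : ∀ i : Fin r, Continuous fun p : ℝ × (Fin r → ℝ) => p.2 i :=
    fun i => (continuous_apply i).comp continuous_snd
  have hKclosed : IsClosed K := by
    have heq : K = {p : ℝ × (Fin r → ℝ) | 1 ≤ p.1} ∩
        ((⋂ i, {p : ℝ × (Fin r → ℝ) | 0 ≤ p.2 i}) ∩
        ({p : ℝ × (Fin r → ℝ) | ∑ i, p.2 i = 1} ∩
        ⋂ i, {p : ℝ × (Fin r → ℝ) | p.1 * p.2 i ≤ A.mulVec p.2 i})) := by
      ext p
      simp only [hKdef, Set.mem_setOf_eq, Set.mem_inter_iff, Set.mem_iInter]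
    rw [heq]
    refine (isClosed_le continuous_const continuous_fst).inter
      ((isClosed_iInter fun i => isClosed_le continuous_const (c2 i)).inter
      ((isClosed_eq (continuous_finset_sum _ fun i _ => c2 i) continuous_const).inter
      (isClosed_iInter fun i => isClosed_le (continuous_fst.mul (c2 i))
        ((contMV A i).comp continuous_snd))))
  have hKcomp : IsCompact K :=
    (isCompact_Icc.prod isCompact_Icc).of_isClosed_subset hKclosed hKsub
  -- K is nonempty
  obtain ⟨i0, hi0⟩ := Function.ne_iff.mp hvne
  have hvi0 : 0 < v i0 := lt_of_le_of_ne (hv0 i0) (Ne.symm (by simpa using hi0))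
  set s : ℝ := ∑ i, v i with hs
  have hspos : 0 < s := Finset.sum_pos' (fun i _ => hv0 i) ⟨i0, Finset.mem_univ i0, hvi0⟩
  have hp0 : ((1 : ℝ), s⁻¹ • v) ∈ K := by
    refine ⟨le_refl 1, fun i => ?_, ?_, fun i => ?_⟩
    · exact mul_nonneg (inv_nonneg.mpr hspos.le) (hv0 i)
    · have hsum : ∑ i, (s⁻¹ • v) i = s⁻¹ * ∑ i, v i := by
        simp [Finset.mul_sum]
      rw [hsum, ← hs, inv_mul_cancel₀ hspos.ne']
    · rw [Matrix.mulVec_smul]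
      simp only [Pi.smul_apply, smul_eq_mul, one_mul]
      exact mul_le_mul_of_nonneg_left (hvA i) (inv_nonneg.mpr hspos.le)
  obtain ⟨p, hpK, hpmax⟩ := hKcomp.exists_isMaxOn ⟨_, hp0⟩ continuous_fst.continuousOn
  obtain ⟨ht1, hx0, hxs, hxA⟩ := hpK
  by_cases heqv : A.mulVec p.2 = p.1 • p.2
  · exact ⟨p.1, p.2, ht1, hbd p ⟨ht1, hx0, hxs, hxA⟩, hx0, hxs, heqv⟩
  exfalso
  set x := p.2 with hxdef
  set z : Fin r → ℝ := A.mulVec x with hz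
  set y : Fin r → ℝ := z - p.1 • x with hy
  have hy0 : ∀ i, 0 ≤ y i := by
    intro i
    simp only [hy, Pi.sub_apply, Pi.smul_apply, smul_eq_mul, sub_nonneg]
    exact hxA i
  have hyne : y ≠ 0 := sub_ne_zero.mpr heqv
  obtain ⟨k, hk⟩ := Finset.exists_ne_zero_of_sum_ne_zero (by rw [hxs]; exact one_ne_zero)
  have hxk : 0 < x k := lt_of_le_of_ne (hx0 k) (Ne.symm hk.2)
  have hzpos : ∀ i, 0 < z i := by
    intro i
    exact Finset.sum_pos' (fun j _ => mul_nonneg (hA i j).le (hx0 j))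
      ⟨k, Finset.mem_univ k, mul_pos (hA i k) hxk⟩
  obtain ⟨k', hk'⟩ := Function.ne_iff.mp hyne
  have hyk' : 0 < y k' := lt_of_le_of_ne (hy0 k') (Ne.symm (by simpa using hk'))
  set w : Fin r → ℝ := A.mulVec y with hwdef
  have hwpos : ∀ i, 0 < w i := by
    intro i
    exact Finset.sum_pos' (fun j _ => mul_nonneg (hA i j).le (hy0 j))
      ⟨k', Finset.mem_univ k', mul_pos (hA i k') hyk'⟩
  haveI : Nonempty (Fin r) := ⟨k⟩
  set δ : ℝ := Finset.univ.inf' Finset.univ_nonempty (fun i => w i / z i) with hδdef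
  have hδpos : 0 < δ := by
    rw [hδdef, Finset.lt_inf'_iff]
    exact fun i _ => div_pos (hwpos i) (hzpos i)
  have hδle : ∀ i, δ * z i ≤ w i := by
    intro i
    have h : δ ≤ w i / z i := Finset.inf'_le (fun i => w i / z i) (Finset.mem_univ i)
    rw [le_div_iff₀ (hzpos i)] at h
    linarith [h]
  set S : ℝ := ∑ i, z i with hSdef
  have hSpos : 0 < S := Finset.sum_pos (fun i _ => hzpos i) Finset.univ_nonempty
  have hAz : ∀ i, (p.1 + δ) * z i ≤ A.mulVec z i := by
    intro i
    have hzy : z = y + p.1 • x := by rw [hy]; abel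
    have hmv : A.mulVec z = w + p.1 • z := by
      conv_lhs => rw [hzy, Matrix.mulVec_add, Matrix.mulVec_smul]
    rw [hmv]
    simp only [Pi.add_apply, Pi.smul_apply, smul_eq_mul]
    have := hδle i
    linarith
  have hqK : ((p.1 + δ, S⁻¹ • z) : ℝ × (Fin r → ℝ)) ∈ K := by
    refine ⟨by linarith, fun i => mul_nonneg (inv_nonneg.mpr hSpos.le) (hzpos i).le,
      ?_, fun i => ?_⟩
    · simp only [Pi.smul_apply, smul_eq_mul, ← Finset.mul_sum]
      field_simp
      exact hSdef.symm
    · rw [Matrix.mulVec_smul]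
      simp only [Pi.smul_apply, smul_eq_mul]
      have h := hAz i
      have hinv : (0:ℝ) ≤ S⁻¹ := inv_nonneg.mpr hSpos.le
      calc (p.1 + δ) * (S⁻¹ * z i) = S⁻¹ * ((p.1 + δ) * z i) := by ring
        _ ≤ S⁻¹ * A.mulVec z i := mul_le_mul_of_nonneg_left h hinv
  have hcontr : p.1 + δ ≤ p.1 := hpmax hqK
  linarith

/-- Weak Perron–Frobenius: a nonnegative matrix dominating a nonzero
nonnegative sub-eigenvector has a real eigenvalue `t ≥ 1`. -/
lemma nonneg_pf (J : Matrix (Fin r) (Fin r) ℝ) (hJ : ∀ i j, 0 ≤ J i j)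
    (v : Fin r → ℝ) (hv0 : ∀ i, 0 ≤ v i) (hvne : v ≠ 0)
    (hvJ : ∀ i, v i ≤ J.mulVec v i) :
    ∃ (t : ℝ) (x : Fin r → ℝ), 1 ≤ t ∧ x ≠ (0 : Fin r → ℝ) ∧ J.mulVec x = t • x := by
  classical
  set E : Matrix (Fin r) (Fin r) ℝ := Matrix.of fun _ _ => (1:ℝ) with hE
  set A : ℕ → Matrix (Fin r) (Fin r) ℝ := fun n => J + ((n:ℝ)+1)⁻¹ • E with hA
  have hinvpos : ∀ n : ℕ, 0 < ((n:ℝ)+1)⁻¹ := fun n => by positivity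
  have hApos : ∀ n i j, 0 < A n i j := by
    intro n i j
    have h1 := hJ i j
    have h2 := hinvpos n
    simp only [hA, hE, Matrix.add_apply, Matrix.smul_apply, Matrix.of_apply, smul_eq_mul,
      mul_one]
    linarith
  have hEmul : ∀ u : Fin r → ℝ, ∀ i, E.mulVec u i = ∑ j, u j := by
    intro u i
    simp [hE, Matrix.mulVec, dotProduct]
  have hAmul : ∀ n (u : Fin r → ℝ) i,
      (A n).mulVec u i = J.mulVec u i + ((n:ℝ)+1)⁻¹ * ∑ j, u j := by
    intro n u i
    rw [hA]
    simp only [Matrix.add_mulVec, Matrix.smul_mulVec, Pi.add_apply, Pi.smul_apply,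
      smul_eq_mul]
    rw [hEmul]
  have hAv : ∀ n i, v i ≤ (A n).mulVec v i := by
    intro n i
    rw [hAmul]
    have h1 : (0:ℝ) ≤ ∑ j, v j := Finset.sum_nonneg fun j _ => hv0 j
    have h2 := (hinvpos n).le
    have := hvJ i
    nlinarith
  have hex : ∀ n, ∃ t x, 1 ≤ t ∧ t ≤ (∑ i, ∑ j, A n i j) ∧ (∀ i, 0 ≤ x i) ∧
      (∑ i, x i = 1) ∧ (A n).mulVec x = t • x :=
    fun n => pos_pf (A n) (hApos n) v hv0 hvne (hAv n)
  choose t x ht1 htM hx0 hxs hAx using hex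
  set M : ℝ := ∑ i : Fin r, ∑ j : Fin r, (J i j + 1) with hMdef
  have htM' : ∀ n, t n ≤ M := by
    intro n
    refine le_trans (htM n) ?_
    refine Finset.sum_le_sum fun i _ => Finset.sum_le_sum fun j _ => ?_
    have h2 : ((n:ℝ)+1)⁻¹ ≤ 1 := by
      have h3 : (1:ℝ) ≤ (n:ℝ)+1 := by
        have := Nat.cast_nonneg (α := ℝ) n
        linarith
      exact inv_le_one_of_one_le₀ h3
    simp only [hA, hE, Matrix.add_apply, Matrix.smul_apply, Matrix.of_apply, smul_eq_mul,
      mul_one]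
    linarith
  -- compact container
  set Δ : Set (Fin r → ℝ) := {x | (∀ i, 0 ≤ x i) ∧ ∑ i, x i = 1} with hΔ
  have hΔclosed : IsClosed Δ := by
    have heq : Δ = (⋂ i, {x : Fin r → ℝ | 0 ≤ x i}) ∩ {x : Fin r → ℝ | ∑ i, x i = 1} := by
      ext q
      simp only [hΔ, Set.mem_setOf_eq, Set.mem_inter_iff, Set.mem_iInter]
    rw [heq]
    exact (isClosed_iInter fun i => isClosed_le continuous_const (continuous_apply i)).inter
      (isClosed_eq (continuous_finset_sum _ fun i _ => continuous_apply i) continuous_const)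
  have hΔsub : Δ ⊆ Set.Icc (0 : Fin r → ℝ) 1 := by
    rintro q ⟨hq0, hqs⟩
    refine ⟨fun i => hq0 i, fun i => ?_⟩
    calc q i ≤ ∑ j, q j := Finset.single_le_sum (fun j _ => hq0 j) (Finset.mem_univ i)
      _ = 1 := hqs
  have hΔcomp : IsCompact Δ := isCompact_Icc.of_isClosed_subset hΔclosed hΔsub
  have hC : IsCompact ((Set.Icc (1:ℝ) M) ×ˢ Δ) := isCompact_Icc.prod hΔcomp
  have hmemC : ∀ n, ((t n, x n) : ℝ × (Fin r → ℝ)) ∈ (Set.Icc (1:ℝ) M) ×ˢ Δ :=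
    fun n => ⟨⟨ht1 n, htM' n⟩, hx0 n, hxs n⟩
  obtain ⟨q, hqC, φ, hφ, htend⟩ := hC.tendsto_subseq hmemC
  have ht' : Tendsto (fun n => t (φ n)) atTop (nhds q.1) :=
    (continuous_fst.tendsto q).comp htend
  have hx' : Tendsto (fun n => x (φ n)) atTop (nhds q.2) :=
    (continuous_snd.tendsto q).comp htend
  have heig : J.mulVec q.2 = q.1 • q.2 := by
    funext i
    have hxi : Tendsto (fun n => x (φ n) i) atTop (nhds (q.2 i)) :=
      ((continuous_apply i).tendsto q.2).comp hx'
    have hJi : Tendsto (fun n => J.mulVec (x (φ n)) i) atTop (nhds (J.mulVec q.2 i)) :=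
      ((contMV J i).tendsto q.2).comp hx'
    have hφtop : Tendsto φ atTop atTop := hφ.tendsto_atTop
    have hinv : Tendsto (fun n => ((φ n : ℝ) + 1)⁻¹) atTop (nhds 0) := by
      have := (tendsto_one_div_add_atTop_nhds_zero_nat (𝕜 := ℝ)).comp hφtop
      simpa [one_div, Function.comp_def] using this
    have hLHS : Tendsto (fun n => J.mulVec (x (φ n)) i + ((φ n : ℝ) + 1)⁻¹)
        atTop (nhds (J.mulVec q.2 i)) := by
      simpa using hJi.add hinv
    have hRHS : Tendsto (fun n => t (φ n) * x (φ n) i) atTop (nhds (q.1 * q.2 i)) :=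
      ht'.mul hxi
    have hsame : (fun n => J.mulVec (x (φ n)) i + ((φ n : ℝ) + 1)⁻¹)
        = fun n => t (φ n) * x (φ n) i := by
      funext n
      have h1 := hAmul (φ n) (x (φ n)) i
      have h2 : (A (φ n)).mulVec (x (φ n)) i = t (φ n) * x (φ n) i := by
        rw [hAx (φ n)]; simp
      rw [← h2, h1, hxs (φ n), mul_one]
    rw [hsame] at hLHS
    have huniq := tendsto_nhds_unique hLHS hRHS
    simp [huniq]
  refine ⟨q.1, q.2, hqC.1.1, ?_, heig⟩
  intro h0
  have := hqC.2.2
  rw [h0] at this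
  simp at this

end Stmt17Aux

open Stmt17Aux

/-- Necessary condition for an outbreak: if `G : [0,1]^r → [0,1]^r` is
coordinate-wise convex with `G(1) = 1`, Jacobian `J` at `1`, and has a fixed
point `u ≠ 1` in `[0,1]^r`, then `⟨1-u, 1-u⟩ ≤ ⟨1-u, J(1-u)⟩` and `J` has a
(complex) eigenvalue with real part at least 1. -/
theorem stmt_17 (r : ℕ) (G : (Fin r → ℝ) → (Fin r → ℝ))
    (J : Matrix (Fin r) (Fin r) ℝ)
    (hmaps : ∀ z ∈ Set.Icc (0 : Fin r → ℝ) 1, G z ∈ Set.Icc (0 : Fin r → ℝ) 1)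
    (hconv : ∀ i, ConvexOn ℝ (Set.Icc (0 : Fin r → ℝ) 1) (fun z => G z i))
    (hG1 : G 1 = 1)
    (hJ : HasFDerivWithinAt G
      (LinearMap.toContinuousLinearMap (Matrix.toLin' J))
      (Set.Icc (0 : Fin r → ℝ) 1) 1)
    (u : Fin r → ℝ) (hu : u ∈ Set.Icc (0 : Fin r → ℝ) 1)
    (hfix : G u = u) (hne : u ≠ 1) :
    (∑ i, (1 - u i) * (1 - u i)) ≤
        (∑ i, (1 - u i) * (J.mulVec (fun j => 1 - u j)) i) ∧
      ∃ lam : ℂ, Module.End.HasEigenvalue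
          (Matrix.toLin' (J.map (Complex.ofReal))) lam ∧ 1 ≤ lam.re := by
  classical
  set L := LinearMap.toContinuousLinearMap (Matrix.toLin' J) with hL
  have hLapp : ∀ w : Fin r → ℝ, L w = J.mulVec w := by
    intro w
    rw [hL]
    simp [Matrix.toLin'_apply]
  -- J has nonnegative entries
  have hJnn : ∀ i j, 0 ≤ J i j := by
    intro i j
    set w0 : Fin r → ℝ := -Pi.single j 1 with hw0
    have hw : (1 + w0) ∈ Set.Icc (0 : Fin r → ℝ) 1 := by
      rw [hw0]
      constructor <;> intro k <;>
      · simp only [Pi.add_apply, Pi.one_apply, Pi.neg_apply, Pi.zero_apply]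
        by_cases hk : k = j <;> simp [hk, Pi.single_apply]
    have hb : ∀ t : ℝ, 0 < t → t ≤ 1 →
        G (1 + t • w0) i ≤ G 1 i + t * 0 := by
      intro t ht0 ht1
      have hmem := mem_box hw ht0.le ht1
      have := (hmaps _ hmem).2 i
      rw [hG1]
      simpa using this
    have h := apply_le_of_slope hJ hw i hb
    rw [hLapp] at h
    have hmv : J.mulVec w0 i = -(J i j) := by
      rw [hw0, Matrix.mulVec_neg]
      simp [Matrix.mulVec_single]
    rw [hmv] at h
    linarith
  -- key coordinatewise inequality  1 - u ≤ J (1 - u)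
  have hkey : ∀ i, 1 - u i ≤ J.mulVec (fun j => 1 - u j) i := by
    intro i
    have hw : (1 + (u - 1)) ∈ Set.Icc (0 : Fin r → ℝ) 1 := by
      simpa using hu
    have hb : ∀ t : ℝ, 0 < t → t ≤ 1 →
        G (1 + t • (u - 1)) i ≤ G 1 i + t * (u i - 1) := by
      intro t ht0 ht1
      have hcvx := (hconv i).2 (Set.right_mem_Icc.mpr (by
        intro k; simp)) hu (by linarith : (0:ℝ) ≤ 1 - t) ht0.le (by ring)
      have harg : (1 - t) • (1 : Fin r → ℝ) + t • u = 1 + t • (u - 1) := by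
        funext k
        simp only [Pi.add_apply, Pi.smul_apply, Pi.one_apply, Pi.sub_apply, smul_eq_mul]
        ring
      rw [harg] at hcvx
      simp only [smul_eq_mul] at hcvx
      rw [hG1, hfix] at hcvx
      simp only [Pi.one_apply] at hcvx
      rw [hG1]
      simp only [Pi.one_apply]
      linarith
    have h := apply_le_of_slope hJ hw i hb
    rw [hLapp] at h
    have hmv : J.mulVec (fun j => 1 - u j) i = -(J.mulVec (u - 1) i) := by
      have h1 : (fun j => 1 - u j) = -(u - 1) := by
        funext k
        simp
      rw [h1, Matrix.mulVec_neg, Pi.neg_apply]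
    rw [hmv]
    linarith
  have hu1 : ∀ i, 0 ≤ 1 - u i := by
    intro i
    have := hu.2 i
    simp only [Pi.one_apply] at this
    linarith
  constructor
  · exact Finset.sum_le_sum fun i _ =>
      mul_le_mul_of_nonneg_left (hkey i) (hu1 i)
  · -- eigenvalue part
    obtain ⟨i0, hi0⟩ := Function.ne_iff.mp hne
    have hvne : (fun j => 1 - u j) ≠ (0 : Fin r → ℝ) := by
      intro h
      have := congrFun h i0
      simp only [Pi.zero_apply] at this
      apply hi0
      simp only [Pi.one_apply]
      linarith
    obtain ⟨t, x, ht1, hxne, heig⟩ := nonneg_pf J hJnn (fun j => 1 - u j) hu1 hvne hkey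
    refine ⟨(t : ℂ), ?_, by simpa using ht1⟩
    obtain ⟨k, hk⟩ := Function.ne_iff.mp hxne
    have hyne : (fun i => (x i : ℂ)) ≠ (0 : Fin r → ℂ) := by
      intro h
      have := congrFun h k
      simp only [Pi.zero_apply, Complex.ofReal_eq_zero] at this
      exact hk (by simpa using this)
    refine Module.End.hasEigenvalue_of_hasEigenvector
      (x := fun i => (x i : ℂ)) ⟨Module.End.mem_eigenspace_iff.mpr ?_, hyne⟩
    rw [Matrix.toLin'_apply]
    funext i
    have hi := congrFun heig i
    simp only [Pi.smul_apply, smul_eq_mul] at hi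
    simp only [Matrix.mulVec, dotProduct, Matrix.map_apply, Pi.smul_apply,
      smul_eq_mul]
    push_cast
    rw [show ∑ j, (J i j : ℂ) * (x j : ℂ) = ((∑ j, J i j * x j : ℝ) : ℂ) by push_cast; ring]
    rw [show (J.mulVec x) i = ∑ j, J i j * x j from rfl] at hi
    rw [hi, Complex.ofReal_mul]
end
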